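/- In the extended infinitary system, the formula ⋀_{a∈C} ¬p(a) is equivalent to ⋀_{A⊆C, A≠∅}( ⋀_{a∈A} p(a) → ⋁_{a∈C∖A} p(a) ), for any set C and atoms p(a) indexed by C; moreover the right-to-left direction of this equivalence (deriving the big conjunction from ⋀_{a∈C} ¬p(a)) is already a theorem of the basic system. -/

import Mathlib

open Classical

/-- Infinitary propositional formulas over a signature `σ`: atoms, set-indexed
conjunctions and disjunctions (represented by families indexed by a type,
which corresponds exactly to *bounded* sets of formulas in the hierarchy),
and implication. -/
inductive IForm (σ : Type) : Type 1
  | atom : σ → IForm σ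
  | conj : (ι : Type) → (ι → IForm σ) → IForm σ
  | disj : (ι : Type) → (ι → IForm σ) → IForm σ
  | impl : IForm σ → IForm σ → IForm σ

namespace IForm

variable {σ : Type}

/-- `⊥` is the empty disjunction. -/
def bot : IForm σ := disj Empty Empty.elim

/-- `¬F` abbreviates `F → ⊥`. -/
def neg (F : IForm σ) : IForm σ := impl F bot

/-- Binary conjunction `F ∧ G` as `{F, G}^∧`. -/
def and2 (F G : IForm σ) : IForm σ := conj Bool (fun b => cond b F G)

/-- Binary disjunction `F ∨ G` as `{F, G}^∨`. -/
def or2 (F G : IForm σ) : IForm σ := disj Bool (fun b => cond b F G)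

/-- Ternary disjunction. -/
def or3 (F G H : IForm σ) : IForm σ := disj (Fin 3) (fun i => [F, G, H].get i)

/-- `F ↔ G` abbreviates `(F → G) ∧ (G → F)`. -/
def biimp (F G : IForm σ) : IForm σ := and2 (impl F G) (impl G F)

/-- Satisfaction of an infinitary formula by an interpretation `I ⊆ σ`. -/
def sat (I : Set σ) : IForm σ → Prop
  | atom p => p ∈ I
  | conj _ f => ∀ i, sat I (f i)
  | disj _ f => ∃ i, sat I (f i)
  | impl F G => sat I F → sat I G

/-- The reduct `F^I` of a formula w.r.t. an interpretation `I`. -/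
noncomputable def reduct (I : Set σ) : IForm σ → IForm σ
  | atom p => if p ∈ I then atom p else bot
  | conj ι f => conj ι (fun i => reduct I (f i))
  | disj ι f => disj ι (fun i => reduct I (f i))
  | impl F G => if sat I (impl F G) then impl (reduct I F) (reduct I G) else bot

/-- `I` satisfies a set of formulas if it satisfies all its elements. -/
def satSet (I : Set σ) (H : Set (IForm σ)) : Prop := ∀ F ∈ H, sat I F

/-- `I` is a stable model of a set `H` of formulas if it is minimal w.r.t.
set inclusion among the interpretations satisfying the reduct `H^I`. -/
def StableModel (I : Set σ) (H : Set (IForm σ)) : Prop :=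
  satSet I (reduct I '' H) ∧ ∀ J : Set σ, satSet J (reduct I '' H) → J ⊆ I → J = I

noncomputable instance : DecidableEq (IForm σ) := Classical.decEq _

/-- The basic infinitary system of natural deduction: sequents `Γ ⇒ F` where
`Γ` is a finite set of infinitary formulas.  Axiom `F ⇒ F`; introduction and
elimination rules for set-indexed conjunction and disjunction and for
implication; weakening. -/
inductive Deriv : Finset (IForm σ) → IForm σ → Prop
  | ax (F : IForm σ) : Deriv {F} F
  | conjI (Γ : Finset (IForm σ)) (ι : Type) (f : ι → IForm σ) :
      (∀ i, Deriv Γ (f i)) → Deriv Γ (conj ι f)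
  | conjE (Γ : Finset (IForm σ)) (ι : Type) (f : ι → IForm σ) (i : ι) :
      Deriv Γ (conj ι f) → Deriv Γ (f i)
  | disjI (Γ : Finset (IForm σ)) (ι : Type) (f : ι → IForm σ) (i : ι) :
      Deriv Γ (f i) → Deriv Γ (disj ι f)
  | disjE (Γ Δ : Finset (IForm σ)) (ι : Type) (f : ι → IForm σ) (F : IForm σ) :
      Deriv Γ (disj ι f) → (∀ i, Deriv (insert (f i) Δ) F) → Deriv (Γ ∪ Δ) F
  | implI (Γ : Finset (IForm σ)) (F G : IForm σ) :
      Deriv (insert F Γ) G → Deriv Γ (impl F G)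
  | implE (Γ Δ : Finset (IForm σ)) (F G : IForm σ) :
      Deriv Γ F → Deriv Δ (impl F G) → Deriv (Γ ∪ Δ) G
  | weak (Γ Δ : Finset (IForm σ)) (F : IForm σ) :
      Deriv Γ F → Deriv (Γ ∪ Δ) F

end IForm
namespace IForm

variable {σ : Type}

/-- The extended system: the basic system plus the axiom schemas
`F ∨ (F → G) ∨ ¬G` (Hosoi), the converse infinitary De Morgan law
`¬⋀ F → ⋁ ¬F`, and the two converse infinitary distributivity laws
(for non-empty families). -/
inductive DerivE : Finset (IForm σ) → IForm σ → Prop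
  | ax (F : IForm σ) : DerivE {F} F
  | conjI (Γ : Finset (IForm σ)) (ι : Type) (f : ι → IForm σ) :
      (∀ i, DerivE Γ (f i)) → DerivE Γ (conj ι f)
  | conjE (Γ : Finset (IForm σ)) (ι : Type) (f : ι → IForm σ) (i : ι) :
      DerivE Γ (conj ι f) → DerivE Γ (f i)
  | disjI (Γ : Finset (IForm σ)) (ι : Type) (f : ι → IForm σ) (i : ι) :
      DerivE Γ (f i) → DerivE Γ (disj ι f)
  | disjE (Γ Δ : Finset (IForm σ)) (ι : Type) (f : ι → IForm σ) (F : IForm σ) :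
      DerivE Γ (disj ι f) → (∀ i, DerivE (insert (f i) Δ) F) → DerivE (Γ ∪ Δ) F
  | implI (Γ : Finset (IForm σ)) (F G : IForm σ) :
      DerivE (insert F Γ) G → DerivE Γ (impl F G)
  | implE (Γ Δ : Finset (IForm σ)) (F G : IForm σ) :
      DerivE Γ F → DerivE Δ (impl F G) → DerivE (Γ ∪ Δ) G
  | weak (Γ Δ : Finset (IForm σ)) (F : IForm σ) :
      DerivE Γ F → DerivE (Γ ∪ Δ) F
  | hosoi (F G : IForm σ) : DerivE ∅ (or3 F (impl F G) (neg G))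
  | demConv (ι : Type) (f : ι → IForm σ) :
      DerivE ∅ (impl (neg (conj ι f)) (disj ι fun i => neg (f i)))
  | distConv1 (ι : Type) [Nonempty ι] (κ : ι → Type) (g : (i : ι) → κ i → IForm σ) :
      DerivE ∅ (impl (conj ι fun i => disj (κ i) (g i))
                     (disj ((i : ι) → κ i) fun c => conj ι fun i => g i (c i)))
  | distConv2 (ι : Type) [Nonempty ι] (κ : ι → Type) (g : (i : ι) → κ i → IForm σ) :
      DerivE ∅ (impl (conj ((i : ι) → κ i) fun c => disj ι fun i => g i (c i))
                     (disj ι fun i => conj (κ i) (g i)))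

/-- The classical extended system: like the extended system, but with the
Hosoi axiom schema replaced by the law of the excluded middle `F ∨ ¬F`. -/
inductive DerivC : Finset (IForm σ) → IForm σ → Prop
  | ax (F : IForm σ) : DerivC {F} F
  | conjI (Γ : Finset (IForm σ)) (ι : Type) (f : ι → IForm σ) :
      (∀ i, DerivC Γ (f i)) → DerivC Γ (conj ι f)
  | conjE (Γ : Finset (IForm σ)) (ι : Type) (f : ι → IForm σ) (i : ι) :
      DerivC Γ (conj ι f) → DerivC Γ (f i)
  | disjI (Γ : Finset (IForm σ)) (ι : Type) (f : ι → IForm σ) (i : ι) :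
      DerivC Γ (f i) → DerivC Γ (disj ι f)
  | disjE (Γ Δ : Finset (IForm σ)) (ι : Type) (f : ι → IForm σ) (F : IForm σ) :
      DerivC Γ (disj ι f) → (∀ i, DerivC (insert (f i) Δ) F) → DerivC (Γ ∪ Δ) F
  | implI (Γ : Finset (IForm σ)) (F G : IForm σ) :
      DerivC (insert F Γ) G → DerivC Γ (impl F G)
  | implE (Γ Δ : Finset (IForm σ)) (F G : IForm σ) :
      DerivC Γ F → DerivC Δ (impl F G) → DerivC (Γ ∪ Δ) G
  | weak (Γ Δ : Finset (IForm σ)) (F : IForm σ) :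
      DerivC Γ F → DerivC (Γ ∪ Δ) F
  | lem (F : IForm σ) : DerivC ∅ (or2 F (neg F))
  | demConv (ι : Type) (f : ι → IForm σ) :
      DerivC ∅ (impl (neg (conj ι f)) (disj ι fun i => neg (f i)))
  | distConv1 (ι : Type) [Nonempty ι] (κ : ι → Type) (g : (i : ι) → κ i → IForm σ) :
      DerivC ∅ (impl (conj ι fun i => disj (κ i) (g i))
                     (disj ((i : ι) → κ i) fun c => conj ι fun i => g i (c i)))
  | distConv2 (ι : Type) [Nonempty ι] (κ : ι → Type) (g : (i : ι) → κ i → IForm σ) :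
      DerivC ∅ (impl (conj ((i : ι) → κ i) fun c => disj ι fun i => g i (c i))
                     (disj ι fun i => conj (κ i) (g i)))

end IForm

/-! The argument works for any family `f : ι → IForm σ` in place of the atoms.
From left to right it is intuitionistic: a nonempty `A` contains some `i`, and `¬fᵢ` refutes
`⋀_{i∈A} fᵢ`. From right to left, the Hosoi axiom yields `¬fᵢ ∨ ¬¬fᵢ` for each `i`, and converse
distributivity turns these into one choice `c : ι → Bool` made for all `i` at once. If `¬¬fᵢ` is
chosen on a nonempty set `A`, then `¬fᵢ` on the complement refutes `⋁_{i∉A} fᵢ`, hence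
`⋀_{i∈A} fᵢ`; by converse De Morgan some `i ∈ A` has `¬fᵢ`, contradicting `¬¬fᵢ`. -/

namespace IForm

variable {σ : Type} {Γ Δ : Finset (IForm σ)} {F G : IForm σ} {ι : Type} {f : ι → IForm σ}

theorem Deriv.weaken (h : Deriv Γ F) (hsub : Γ ⊆ Δ) : Deriv Δ F := by
  simpa only [Finset.union_eq_right.mpr hsub] using Deriv.weak Γ Δ F h

theorem Deriv.hyp (h : F ∈ Γ) : Deriv Γ F :=
  (Deriv.ax F).weaken (Finset.singleton_subset_iff.mpr h)

theorem Deriv.mp (hF : Deriv Γ F) (hFG : Deriv Γ (impl F G)) : Deriv Γ G := by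
  simpa only [Finset.union_self] using Deriv.implE Γ Γ F G hF hFG

theorem Deriv.exfalso (h : Deriv Γ bot) : Deriv Γ F := by
  simpa only [Finset.union_self] using Deriv.disjE Γ Γ Empty Empty.elim F h Empty.rec

theorem Deriv.toDerivE (h : Deriv Γ F) : DerivE Γ F := by
  induction h with
  | ax F => exact .ax F
  | conjI Γ ι f _ ih => exact .conjI Γ ι f ih
  | conjE Γ ι f i _ ih => exact .conjE Γ ι f i ih
  | disjI Γ ι f i _ ih => exact .disjI Γ ι f i ih
  | disjE Γ Δ ι f F _ _ ih₁ ih₂ => exact .disjE Γ Δ ι f F ih₁ ih₂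
  | implI Γ F G _ ih => exact .implI Γ F G ih
  | implE Γ Δ F G _ _ ih₁ ih₂ => exact .implE Γ Δ F G ih₁ ih₂
  | weak Γ Δ F _ ih => exact .weak Γ Δ F ih

theorem DerivE.weaken (h : DerivE Γ F) (hsub : Γ ⊆ Δ) : DerivE Δ F := by
  simpa only [Finset.union_eq_right.mpr hsub] using DerivE.weak Γ Δ F h

theorem DerivE.of_empty (h : DerivE ∅ F) : DerivE Γ F :=
  h.weaken (Finset.empty_subset Γ)

theorem DerivE.hyp (h : F ∈ Γ) : DerivE Γ F :=
  (DerivE.ax F).weaken (Finset.singleton_subset_iff.mpr h)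

theorem DerivE.mp (hF : DerivE Γ F) (hFG : DerivE Γ (impl F G)) : DerivE Γ G := by
  simpa only [Finset.union_self] using DerivE.implE Γ Γ F G hF hFG

theorem DerivE.exfalso (h : DerivE Γ bot) : DerivE Γ F := by
  simpa only [Finset.union_self] using DerivE.disjE Γ Γ Empty Empty.elim F h Empty.rec

theorem DerivE.disjElim (h : DerivE Γ (disj ι f)) (hcases : ∀ i, DerivE (insert (f i) Γ) F) :
    DerivE Γ F := by
  simpa only [Finset.union_self] using DerivE.disjE Γ Γ ι f F h hcases

theorem DerivE.biimpI (hFG : DerivE Γ (impl F G)) (hGF : DerivE Γ (impl G F)) :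
    DerivE Γ (biimp F G) :=
  DerivE.conjI Γ Bool _ fun b => by cases b <;> assumption

theorem DerivE.mt (hFG : DerivE Γ (impl F G)) (hG : DerivE Γ (neg G)) : DerivE Γ (neg F) := by
  have hsub := Finset.subset_insert F Γ
  have hGF : DerivE (insert F Γ) G := .mp (.hyp (Finset.mem_insert_self F Γ)) (hFG.weaken hsub)
  exact DerivE.implI Γ F bot (hGF.mp (hG.weaken hsub))

theorem DerivE.neg_disj (h : ∀ i, DerivE Γ (neg (f i))) : DerivE Γ (neg (disj ι f)) := by
  refine DerivE.implI Γ _ bot (.disjElim (.hyp (Finset.mem_insert_self _ Γ)) fun i => ?_)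
  refine .mp (.hyp (Finset.mem_insert_self _ _)) ((h i).weaken ?_)
  exact (Finset.subset_insert _ Γ).trans (Finset.subset_insert _ _)

/-- The Hosoi axiom with `G := ¬F`. -/
theorem DerivE.wem (F : IForm σ) : DerivE ∅ (or2 (neg F) (neg (neg F))) := by
  refine DerivE.disjElim (DerivE.hosoi F (neg F)) fun i => ?_
  fin_cases i
  · -- `F` refutes `¬F`
    refine DerivE.disjI _ Bool _ false (DerivE.implI _ _ _ ?_)
    exact .mp (.hyp (by simp)) (.hyp (Finset.mem_insert_self _ _))
  · -- `F → ¬F` refutes `F`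
    refine DerivE.disjI _ Bool _ true (DerivE.implI _ _ _ ?_)
    have hF : DerivE (insert F {impl F (neg F)}) F := .hyp (Finset.mem_insert_self _ _)
    have hFnF : DerivE (insert F {impl F (neg F)}) (impl F (neg F)) := .hyp (by simp)
    exact hF.mp (hF.mp hFnF)
  · exact DerivE.disjI _ Bool _ false (.hyp (Finset.mem_insert_self _ _))

theorem DerivE.disj_decide_neg [Nonempty ι] (f : ι → IForm σ) :
    DerivE ∅ (disj (ι → Bool) fun c => conj ι fun i => cond (c i) (neg (f i)) (neg (neg (f i)))) :=
  .mp (.conjI ∅ ι _ fun i => DerivE.wem (f i))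
    (DerivE.distConv1 ι (fun _ => Bool) fun i b => cond b (neg (f i)) (neg (neg (f i))))

theorem DerivE.bot_of_neg_conj (h : DerivE Γ (neg (conj ι f)))
    (hnn : ∀ i, DerivE Γ (neg (neg (f i)))) : DerivE Γ bot :=
  .disjElim (h.mp (DerivE.demConv ι f).of_empty) fun i =>
    .mp (.hyp (Finset.mem_insert_self _ Γ)) ((hnn i).weaken (Finset.subset_insert _ Γ))

def negAll (f : ι → IForm σ) : IForm σ :=
  conj ι fun a => neg (f a)

def subsetImpls (f : ι → IForm σ) : IForm σ :=
  conj {A : Set ι // A.Nonempty} fun A =>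
    impl (conj {a : ι // a ∈ A.1} fun a => f a.1) (disj {a : ι // a ∉ A.1} fun a => f a.1)

theorem Deriv.negAll_impl_subsetImpls (f : ι → IForm σ) :
    Deriv ∅ (impl (negAll f) (subsetImpls f)) := by
  refine Deriv.implI _ _ _ (Deriv.conjI _ _ _ fun A => Deriv.implI _ _ _ ?_)
  obtain ⟨A, a, ha⟩ := A
  rw [Finset.insert_empty]
  have hfa : Deriv {conj {a : ι // a ∈ A} (fun a => f a.1), negAll f} (f a) :=
    Deriv.conjE _ {a : ι // a ∈ A} (fun a => f a.1) ⟨a, ha⟩ (.hyp (by simp))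
  exact (hfa.mp (Deriv.conjE _ ι (fun a => neg (f a)) a (.hyp (by simp [negAll])))).exfalso

theorem DerivE.negAll_of_decide {c : ι → Bool} (hS : DerivE Γ (subsetImpls f))
    (hc : DerivE Γ (conj ι fun i => cond (c i) (neg (f i)) (neg (neg (f i))))) :
    DerivE Γ (negAll f) := by
  have hci (i : ι) := DerivE.conjE _ _ _ i hc
  by_cases hall : ∀ i, c i = true
  · exact .conjI _ _ _ fun i => by simpa only [hall i, cond_true] using hci i
  · obtain ⟨i₀, hi₀⟩ := not_forall.mp hall
    let A : Set ι := {i | c i = false}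
    have hA := DerivE.conjE _ _ _ ⟨A, i₀, Bool.eq_false_iff.mpr hi₀⟩ hS
    have hoff : DerivE Γ (neg (disj {i : ι // i ∉ A} fun i => f i.1)) :=
      .neg_disj fun ⟨i, hi⟩ => by
        simpa only [show c i = true by simpa [A] using hi, cond_true] using hci i
    refine DerivE.exfalso (.bot_of_neg_conj (hA.mt hoff) fun ⟨i, hi⟩ => ?_)
    simpa only [show c i = false from hi, cond_false] using hci i

theorem DerivE.subsetImpls_impl_negAll (f : ι → IForm σ) :
    DerivE ∅ (impl (subsetImpls f) (negAll f)) := by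
  refine DerivE.implI _ _ _ ?_
  cases isEmpty_or_nonempty ι with
  | inl _ => exact .conjI _ _ _ isEmptyElim
  | inr _ =>
    refine DerivE.disjElim (DerivE.disj_decide_neg f).of_empty fun c => ?_
    exact .negAll_of_decide (.hyp (by simp)) (.hyp (Finset.mem_insert_self _ _))

end IForm

open IForm in
/-- `⋀_{a∈C} ¬p(a)` is equivalent in the extended system to
`⋀_{A⊆C, A≠∅}( ⋀_{a∈A} p(a) → ⋁_{a∈C∖A} p(a) )`, where the atoms `p(a)` are
indexed by the elements of `C`; moreover the derivation of the big
conjunction from `⋀_{a∈C} ¬p(a)` is already a theorem of the basic system. -/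
theorem cardinality_constraint_zero (C : Type) :
    DerivE ∅ (biimp
      (conj C fun a => neg (atom a))
      (conj {A : Set C // A.Nonempty} fun A =>
        impl (conj {a : C // a ∈ A.1} fun a => atom a.1)
             (disj {a : C // a ∉ A.1} fun a => atom a.1)))
    ∧
    Deriv ∅ (impl
      (conj C fun a => neg (atom a))
      (conj {A : Set C // A.Nonempty} fun A =>
        impl (conj {a : C // a ∈ A.1} fun a => atom a.1)
             (disj {a : C // a ∉ A.1} fun a => atom a.1))) := by
  have hforward := Deriv.negAll_impl_subsetImpls (atom (σ := C))
  exact ⟨.biimpI hforward.toDerivE (.subsetImpls_impl_negAll atom), hforward⟩
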